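/- Let $q_1,\ldots,q_J, \tilde{q}_1,\ldots,\tilde{q}_J$ be complex numbers. Then $\big(\sum_j |q_j|^4\big)\big(\sum_j |\tilde{q}_j|^4\big) \le \Big(\big(\sum_j |q_j|^2\big)\big(\sum_j |\tilde{q}_j|^2\big) - \sum_{i\ne j} q_i q_j^* \tilde{q}_i^* \tilde{q}_j\Big)^2$, with equality when $q_j = \tilde{q}_j$ for all $j$. -/

import Mathlib

/-!
The off-diagonal sum is `|∑ q_j q̃_j^*|² - ∑ |q_j|² |q̃_j|²`, and `|∑ q_j q̃_j^*| ≤ ∑ u_j v_j`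
with `u_j = |q_j|`, `v_j = |q̃_j|`, so it suffices to prove the real inequality
`∑ u⁴ ∑ v⁴ ≤ (∑ u² ∑ v² - (∑ u v)² + M)²`, `M = ∑ u² v²`.
With `d_ij = u_i v_j - u_j v_i` and `D = ∑_{i,j} d_ij²`, Lagrange's identity gives
`∑ u² ∑ v² - (∑ u v)² = D / 2` and, applied to `u²` and `v²`,
`∑ u⁴ ∑ v⁴ - M² = ½ ∑_{i,j} d_ij² (d_ij² + 4 u_i v_i u_j v_j)`.
For `i ≠ j` both `d_ij² ≤ D / 2` (as `d_ji = -d_ij`) and `2 u_i v_i u_j v_j ≤ M`, so the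
right-hand side is at most `D (D / 2 + 2 M) / 2`, i.e. `∑ u⁴ ∑ v⁴ ≤ (M + D / 2)²`.
-/

open Finset

section

variable {ι R : Type*} [Fintype ι] [CommRing R]

theorem sum_offDiag_mul_eq [DecidableEq ι] (f g : ι → R) :
    ∑ p ∈ univ.offDiag, f p.1 * g p.2 = (∑ i, f i) * (∑ i, g i) - ∑ i, f i * g i := by
  rw [eq_sub_iff_add_eq, Fintype.sum_mul_sum, ← Fintype.sum_prod_type',
    ← sum_diag univ (fun p => f p.1 * g p.2), ← sum_union (disjoint_diag_offDiag _).symm,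
    union_comm, diag_union_offDiag, univ_product_univ]

theorem sum_prod_mul_eq (f g : ι → R) :
    ∑ p : ι × ι, f p.1 * g p.2 = (∑ i, f i) * ∑ i, g i := by
  rw [Fintype.sum_mul_sum, Fintype.sum_prod_type]

theorem sum_sub_mul_sq_eq (f g : ι → R) :
    ∑ p : ι × ι, (f p.1 * g p.2 - f p.2 * g p.1) ^ 2 =
      2 * ((∑ i, f i ^ 2) * (∑ i, g i ^ 2) - (∑ i, f i * g i) ^ 2) := by
  have hfg : ∑ p : ι × ι, f p.1 ^ 2 * g p.2 ^ 2 = (∑ i, f i ^ 2) * ∑ i, g i ^ 2 :=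
    sum_prod_mul_eq (f · ^ 2) (g · ^ 2)
  have hgf : ∑ p : ι × ι, g p.1 ^ 2 * f p.2 ^ 2 = (∑ i, g i ^ 2) * ∑ i, f i ^ 2 :=
    sum_prod_mul_eq (g · ^ 2) (f · ^ 2)
  have hdiag : ∑ p : ι × ι, (f p.1 * g p.1) * (f p.2 * g p.2) = (∑ i, f i * g i) ^ 2 :=
    (sum_prod_mul_eq (fun i => f i * g i) (fun i => f i * g i)).trans (sq _).symm
  calc ∑ p : ι × ι, (f p.1 * g p.2 - f p.2 * g p.1) ^ 2
      = ∑ p : ι × ι, (f p.1 ^ 2 * g p.2 ^ 2 + g p.1 ^ 2 * f p.2 ^ 2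
          - 2 * ((f p.1 * g p.1) * (f p.2 * g p.2))) := by congr! 1 with p; ring
    _ = 2 * ((∑ i, f i ^ 2) * (∑ i, g i ^ 2) - (∑ i, f i * g i) ^ 2) := by
      rw [sum_sub_distrib, sum_add_distrib, ← mul_sum, hfg, hgf, hdiag]
      ring

theorem two_mul_sq_le_sum_sq_of_antisymm {d : ι × ι → ℝ} (hd : ∀ i j, d (j, i) = -d (i, j))
    (p : ι × ι) : 2 * d p ^ 2 ≤ ∑ q, d q ^ 2 := by
  obtain ⟨i, j⟩ := p
  by_cases hij : i = j
  · subst hij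
    have hdiag : d (i, i) = 0 := by linarith [hd i i]
    rw [hdiag]
    simpa using sum_nonneg fun q _ => sq_nonneg (d q)
  · have hne : (i, j) ≠ (j, i) := fun h => hij (Prod.ext_iff.1 h).1
    have hpair :=
      add_le_sum (fun q _ => sq_nonneg (d q)) (mem_univ (i, j)) (mem_univ (j, i)) hne
    rw [hd i j, neg_sq] at hpair
    linarith

theorem two_mul_le_sum_sq (x : ι → ℝ) {i j : ι} (hij : i ≠ j) :
    2 * x i * x j ≤ ∑ k, x k ^ 2 :=
  (two_mul_le_add_sq _ _).trans
    (add_le_sum (fun k _ => sq_nonneg (x k)) (mem_univ i) (mem_univ j) hij)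

theorem sum_pow_four_mul_sum_pow_four_le (u v : ι → ℝ) :
    (∑ i, u i ^ 4) * (∑ i, v i ^ 4) ≤
      ((∑ i, u i ^ 2) * (∑ i, v i ^ 2) - (∑ i, u i * v i) ^ 2 + ∑ i, u i ^ 2 * v i ^ 2) ^ 2 := by
  set d : ι × ι → ℝ := fun p => u p.1 * v p.2 - u p.2 * v p.1 with hd
  set D := ∑ p, d p ^ 2
  set M := ∑ i, u i ^ 2 * v i ^ 2
  have hD : D = 2 * ((∑ i, u i ^ 2) * (∑ i, v i ^ 2) - (∑ i, u i * v i) ^ 2) :=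
    sum_sub_mul_sq_eq u v
  have hF : ∑ p : ι × ι, (u p.1 ^ 2 * v p.2 ^ 2 - u p.2 ^ 2 * v p.1 ^ 2) ^ 2 =
      2 * ((∑ i, u i ^ 4) * (∑ i, v i ^ 4) - M ^ 2) := by
    have h := sum_sub_mul_sq_eq (u · ^ 2) (v · ^ 2)
    simp only [← pow_mul] at h
    exact h
  have hterm : ∀ p : ι × ι,
      (u p.1 ^ 2 * v p.2 ^ 2 - u p.2 ^ 2 * v p.1 ^ 2) ^ 2 ≤ d p ^ 2 * (D / 2 + 2 * M) := by
    rintro ⟨i, j⟩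
    by_cases hij : i = j
    · subst hij
      simp [hd]
    have hfactor : (u i ^ 2 * v j ^ 2 - u j ^ 2 * v i ^ 2) ^ 2 =
        d (i, j) ^ 2 * (d (i, j) ^ 2 + 2 * (2 * (u i * v i) * (u j * v j))) := by
      simp only [hd]; ring
    have hd_le :=
      two_mul_sq_le_sum_sq_of_antisymm (d := d) (fun i j => by simp only [hd]; ring) (i, j)
    have hx_le := two_mul_le_sum_sq (fun k => u k * v k) hij
    simp only [mul_pow] at hx_le
    rw [hfactor]
    exact mul_le_mul_of_nonneg_left (by linarith) (sq_nonneg _)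
  have hsum := sum_le_sum fun p (_ : p ∈ univ) => hterm p
  rw [hF, ← sum_mul] at hsum
  rw [show (∑ i, u i ^ 2) * (∑ i, v i ^ 2) - (∑ i, u i * v i) ^ 2 = D / 2 by linarith]
  linear_combination (1 / 2 : ℝ) * hsum

theorem re_sum_offDiag_mul_star [DecidableEq ι] (q qt : ι → ℂ) :
    (∑ p ∈ univ.offDiag, q p.1 * star (q p.2) * star (qt p.1) * qt p.2).re =
      ‖∑ i, q i * star (qt i)‖ ^ 2 - ∑ i, ‖q i‖ ^ 2 * ‖qt i‖ ^ 2 := by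
  set w : ι → ℂ := fun i => q i * star (qt i)
  have hw : ∀ p : ι × ι,
      q p.1 * star (q p.2) * star (qt p.1) * qt p.2 = w p.1 * star (w p.2) :=
    fun p => by simp only [w, star_mul, star_star]; ring
  rw [sum_congr rfl fun p _ => hw p, sum_offDiag_mul_eq w (fun i => star (w i)), ← star_sum]
  simp only [Complex.star_def, Complex.mul_conj', w, norm_mul, Complex.norm_conj]
  norm_cast
  simp only [mul_pow]

variable {𝕜 : Type*} [RCLike 𝕜]

theorem sum_norm_pow_four_mul_le (q qt : ι → 𝕜) :
    (∑ i, ‖q i‖ ^ 4) * (∑ i, ‖qt i‖ ^ 4) ≤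
      ((∑ i, ‖q i‖ ^ 2) * (∑ i, ‖qt i‖ ^ 2) -
        (‖∑ i, q i * star (qt i)‖ ^ 2 - ∑ i, ‖q i‖ ^ 2 * ‖qt i‖ ^ 2)) ^ 2 := by
  have hz : ‖∑ i, q i * star (qt i)‖ ≤ ∑ i, ‖q i‖ * ‖qt i‖ :=
    (norm_sum_le _ _).trans_eq (by simp)
  have hCS := sum_mul_sq_le_sq_mul_sq univ (‖q ·‖) (‖qt ·‖)
  have hM : 0 ≤ ∑ i, ‖q i‖ ^ 2 * ‖qt i‖ ^ 2 := sum_nonneg fun i _ => by positivity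
  refine (sum_pow_four_mul_sum_pow_four_le (‖q ·‖) (‖qt ·‖)).trans
    (pow_le_pow_left₀ (by linarith) ?_ 2)
  linarith [pow_le_pow_left₀ (norm_nonneg _) hz 2]

theorem norm_sum_mul_star_self (q : ι → 𝕜) : ‖∑ i, q i * star (q i)‖ = ∑ i, ‖q i‖ ^ 2 := by
  simp only [RCLike.star_def, RCLike.mul_conj]
  norm_cast
  exact Real.norm_of_nonneg (sum_nonneg fun i _ => by positivity)

end

open Finset in
theorem subgaussian_majorization_core
    (J : ℕ) (q qt : Fin J → ℂ) :
    (∑ j, ‖q j‖ ^ 4) * (∑ j, ‖qt j‖ ^ 4) ≤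
        ((∑ j, ‖q j‖ ^ 2) * (∑ j, ‖qt j‖ ^ 2) -
          (∑ p ∈ Finset.univ.offDiag,
              q p.1 * star (q p.2) * star (qt p.1) * qt p.2).re) ^ 2 ∧
      ((∀ j, q j = qt j) →
        (∑ j, ‖q j‖ ^ 4) * (∑ j, ‖qt j‖ ^ 4) =
          ((∑ j, ‖q j‖ ^ 2) * (∑ j, ‖qt j‖ ^ 2) -
            (∑ p ∈ Finset.univ.offDiag,
                q p.1 * star (q p.2) * star (qt p.1) * qt p.2).re) ^ 2) := by
  rw [re_sum_offDiag_mul_star]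
  refine ⟨sum_norm_pow_four_mul_le q qt, fun h => ?_⟩
  obtain rfl : q = qt := funext h
  have h4 : ∑ i, ‖q i‖ ^ 2 * ‖q i‖ ^ 2 = ∑ i, ‖q i‖ ^ 4 :=
    sum_congr rfl fun i _ => by ring
  rw [norm_sum_mul_star_self, h4]
  ring
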